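/- Let b be an L(J,K)-valued Schur multiplier on 𝔹^d with b(0) = 0, and suppose X, Y are two extremal contractive Gleason solutions for H(b) that are unitarily equivalent via a unitary W on H(b) with W X (W* ⊗ I_d) = Y. Then W k_z^b = k_z^b R for a fixed unitary R ∈ L(K) and all z ∈ 𝔹^d; i.e., W is a constant unitary multiplier. -/

import Mathlib

open ContinuousLinearMap

set_option synthInstance.maxHeartbeats 1000000
set_option maxHeartbeats 1000000

noncomputable section

instance piLpComplete {d : ℕ} {H : Type*} [NormedAddCommGroup H]
    [InnerProductSpace ℂ H] [CompleteSpace H] :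
    CompleteSpace (PiLp 2 fun _ : Fin d => H) :=
  inferInstance

/-- The row operator `z : H^d → H`, `(h₁,...,h_d) ↦ Σ zⱼ hⱼ`, for a scalar row `z ∈ ℂ^d`. -/
def rowOp {d : ℕ} {H : Type*} [NormedAddCommGroup H] [InnerProductSpace ℂ H]
    (z : EuclideanSpace ℂ (Fin d)) : PiLp 2 (fun _ : Fin d => H) →L[ℂ] H :=
  ∑ j, z j • ((ContinuousLinearMap.proj j : (∀ _ : Fin d, H) →L[ℂ] H).comp
    (PiLp.continuousLinearEquiv 2 ℂ (fun _ : Fin d => H)).toContinuousLinearMap)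

/-- The column operator `z* : H → H^d`, `h ↦ (z̄₁ h, ..., z̄_d h)`; the adjoint of `rowOp z`. -/
def colOp {d : ℕ} {H : Type*} [NormedAddCommGroup H] [InnerProductSpace ℂ H]
    (z : EuclideanSpace ℂ (Fin d)) : H →L[ℂ] PiLp 2 (fun _ : Fin d => H) :=
  ((PiLp.continuousLinearEquiv 2 ℂ (fun _ : Fin d => H)).symm.toContinuousLinearMap).comp
    (ContinuousLinearMap.pi fun j => (starRingEnd ℂ (z j)) • ContinuousLinearMap.id ℂ H)

/-- Ampliation `A ⊗ I_d` of an operator `A : H → J` acting componentwise on columns. -/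
def liftD {d : ℕ} {H J : Type*} [NormedAddCommGroup H] [InnerProductSpace ℂ H]
    [NormedAddCommGroup J] [InnerProductSpace ℂ J] (A : H →L[ℂ] J) :
    PiLp 2 (fun _ : Fin d => H) →L[ℂ] PiLp 2 (fun _ : Fin d => J) :=
  ((PiLp.continuousLinearEquiv 2 ℂ (fun _ : Fin d => J)).symm.toContinuousLinearMap).comp <|
    (ContinuousLinearMap.pi fun j =>
      A.comp ((ContinuousLinearMap.proj j : (∀ _ : Fin d, H) →L[ℂ] H))).comp
    (PiLp.continuousLinearEquiv 2 ℂ (fun _ : Fin d => H)).toContinuousLinearMap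

open scoped InnerProductSpace

/-! Since `b 0 = 0`, the kernel identity at `0` makes `k₀ := kb 0` an isometry, and extremality
gives `X X* = Y Y* = 1 - k₀ k₀*`. As `Y Y* = W X X* W*`, the unitary `W` commutes with the
projection `k₀ k₀*`, so its compression `R := k₀* W k₀` is unitary with `W k₀ = k₀ R` and
`W* k₀ = k₀ R*`. Finally `1 - Y z* = W (1 - X z*) W*`, and the Gleason formula
`k_z = (1 - X z*)⁻¹ k₀` turns this into `k_z = W k_z R*`. -/

theorem Ring.inverse_units_conj {M₀ : Type*} [MonoidWithZero M₀] (u : M₀ˣ) (a : M₀) :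
    Ring.inverse (u * a * ↑u⁻¹) = u * Ring.inverse a * ↑u⁻¹ := by
  rw [Ring.inverse_mul (Or.inr u⁻¹.isUnit), Ring.inverse_mul (Or.inl u.isUnit),
    Ring.inverse_unit, Ring.inverse_unit, inv_inv, mul_assoc]

namespace ContinuousLinearMap

variable {H K : Type*} [NormedAddCommGroup H] [InnerProductSpace ℂ H] [CompleteSpace H]
  [NormedAddCommGroup K] [InnerProductSpace ℂ K] [CompleteSpace K]

theorem ringInverse_conj_unitary (W : H →L[ℂ] H) (hW : adjoint W ∘L W = 1)
    (hW' : W ∘L adjoint W = 1) (A : H →L[ℂ] H) :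
    Ring.inverse (W ∘L A ∘L adjoint W) = W ∘L Ring.inverse A ∘L adjoint W :=
  Ring.inverse_units_conj ⟨W, adjoint W, hW', hW⟩ A

theorem comp_commute_of_conj_eq (W P : H →L[ℂ] H) (hW : adjoint W ∘L W = 1)
    (hWP : W ∘L P ∘L adjoint W = P) : W ∘L P = P ∘L W := by
  conv_rhs => rw [← hWP]
  simp only [comp_assoc, hW, one_def, comp_id]

theorem adjoint_comp_self_eq_one_of_comp_eq_comp (V : K →L[ℂ] H) (hV : adjoint V ∘L V = 1)
    (W : H →L[ℂ] H) (hW : adjoint W ∘L W = 1) (R : K →L[ℂ] K) (hWV : W ∘L V = V ∘L R) :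
    adjoint R ∘L R = 1 :=
  calc adjoint R ∘L R = adjoint R ∘L (adjoint V ∘L V) ∘L R := by rw [hV, one_def, id_comp]
    _ = adjoint (V ∘L R) ∘L (V ∘L R) := by simp only [adjoint_comp, comp_assoc]
    _ = adjoint V ∘L (adjoint W ∘L W) ∘L V := by simp only [← hWV, adjoint_comp, comp_assoc]
    _ = 1 := by rw [hW, one_def, id_comp, hV]

theorem comp_eq_comp_compression (V : K →L[ℂ] H) (hV : adjoint V ∘L V = 1) (W : H →L[ℂ] H)
    (hWP : W ∘L (V ∘L adjoint V) = (V ∘L adjoint V) ∘L W) :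
    W ∘L V = V ∘L (adjoint V ∘L W ∘L V) :=
  calc W ∘L V = W ∘L (V ∘L adjoint V) ∘L V := by rw [comp_assoc V, hV, one_def, comp_id]
    _ = V ∘L (adjoint V ∘L W ∘L V) := by rw [← comp_assoc, hWP]; simp only [comp_assoc]

theorem exists_unitary_comp_eq_comp_of_commute (V : K →L[ℂ] H) (hV : adjoint V ∘L V = 1)
    (W : H →L[ℂ] H) (hW : adjoint W ∘L W = 1) (hW' : W ∘L adjoint W = 1)
    (hWP : W ∘L (V ∘L adjoint V) = (V ∘L adjoint V) ∘L W) :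
    ∃ R : K →L[ℂ] K, adjoint R ∘L R = 1 ∧ R ∘L adjoint R = 1 ∧
      W ∘L V = V ∘L R ∧ adjoint W ∘L V = V ∘L adjoint R := by
  have hW'P : adjoint W ∘L (V ∘L adjoint V) = (V ∘L adjoint V) ∘L adjoint W := by
    simpa only [adjoint_comp, adjoint_adjoint, comp_assoc] using congrArg adjoint hWP.symm
  have hWV := comp_eq_comp_compression V hV W hWP
  have hW'V : adjoint W ∘L V = V ∘L adjoint (adjoint V ∘L W ∘L V) := by
    simpa only [adjoint_comp, adjoint_adjoint, comp_assoc]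
      using comp_eq_comp_compression V hV (adjoint W) hW'P
  refine ⟨_, adjoint_comp_self_eq_one_of_comp_eq_comp V hV W hW _ hWV, ?_, hWV, hW'V⟩
  simpa only [adjoint_adjoint] using adjoint_comp_self_eq_one_of_comp_eq_comp V hV (adjoint W)
    (by rwa [adjoint_adjoint]) _ hW'V

end ContinuousLinearMap

section Ampliation

variable {d : ℕ} {H J L : Type*} [NormedAddCommGroup H] [InnerProductSpace ℂ H]
  [NormedAddCommGroup J] [InnerProductSpace ℂ J] [NormedAddCommGroup L] [InnerProductSpace ℂ L]

theorem liftD_comp (A : J →L[ℂ] L) (B : H →L[ℂ] J) :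
    liftD (d := d) (A ∘L B) = liftD A ∘L liftD B :=
  rfl

theorem liftD_one : liftD (d := d) (1 : H →L[ℂ] H) = 1 :=
  rfl

theorem liftD_comp_colOp (A : H →L[ℂ] J) (z : EuclideanSpace ℂ (Fin d)) :
    liftD A ∘L colOp z = colOp z ∘L A := by
  ext h j
  exact map_smul A _ h

theorem adjoint_liftD [CompleteSpace H] [CompleteSpace J] (A : H →L[ℂ] J) :
    adjoint (liftD (d := d) A) = liftD (adjoint A) := by
  refine ((eq_adjoint_iff _ _).mpr fun x y => ?_).symm
  simp only [PiLp.inner_apply]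
  exact Finset.sum_congr rfl fun j _ => adjoint_inner_left A (y j) (x j)

end Ampliation

section UnitaryConjugation

variable {d : ℕ} {H : Type*} [NormedAddCommGroup H] [InnerProductSpace ℂ H] [CompleteSpace H]

theorem conj_comp_adjoint_conj (W : H →L[ℂ] H) (hW : adjoint W ∘L W = 1)
    (X : PiLp 2 (fun _ : Fin d => H) →L[ℂ] H) :
    (W ∘L X ∘L liftD (adjoint W)) ∘L adjoint (W ∘L X ∘L liftD (adjoint W))
      = W ∘L (X ∘L adjoint X) ∘L adjoint W := by
  have hlift : liftD (d := d) (adjoint W) ∘L adjoint (liftD (adjoint W)) = 1 := by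
    rw [adjoint_liftD, adjoint_adjoint, ← liftD_comp, hW, liftD_one]
  simp only [adjoint_comp, comp_assoc]
  rw [← comp_assoc (liftD _), hlift, one_def, id_comp]

theorem one_sub_conj_comp_colOp (W : H →L[ℂ] H) (hW' : W ∘L adjoint W = 1)
    (X : PiLp 2 (fun _ : Fin d => H) →L[ℂ] H) (z : EuclideanSpace ℂ (Fin d)) :
    1 - (W ∘L X ∘L liftD (adjoint W)) ∘L colOp z = W ∘L (1 - X ∘L colOp z) ∘L adjoint W := by
  simp only [sub_comp, comp_sub, one_def, id_comp, comp_assoc, liftD_comp_colOp]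
  rw [hW', one_def]

end UnitaryConjugation

theorem stmt_17 {d : ℕ} {J K Hb : Type*}
    [NormedAddCommGroup J] [InnerProductSpace ℂ J] [CompleteSpace J]
    [NormedAddCommGroup K] [InnerProductSpace ℂ K] [CompleteSpace K]
    [NormedAddCommGroup Hb] [InnerProductSpace ℂ Hb] [CompleteSpace Hb]
    (b : EuclideanSpace ℂ (Fin d) → (J →L[ℂ] K)) (hb0 : b 0 = 0)
    (kb : EuclideanSpace ℂ (Fin d) → (K →L[ℂ] Hb))
    (hker : ∀ z w : EuclideanSpace ℂ (Fin d), ‖z‖ < 1 → ‖w‖ < 1 →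
      (adjoint (kb z)) ∘L kb w
        = (1 - ⟪w, z⟫_ℂ)⁻¹ • ((1 : K →L[ℂ] K) - (b z) ∘L adjoint (b w)))
    (X Y : PiLp 2 (fun _ : Fin d => Hb) →L[ℂ] Hb)
    (hGleasonX : ∀ z : EuclideanSpace ℂ (Fin d), ‖z‖ < 1 →
      (Ring.inverse (1 - X ∘L colOp z) : Hb →L[ℂ] Hb) ∘L kb 0 = kb z)
    (hGleasonY : ∀ z : EuclideanSpace ℂ (Fin d), ‖z‖ < 1 →
      (Ring.inverse (1 - Y ∘L colOp z) : Hb →L[ℂ] Hb) ∘L kb 0 = kb z)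
    (hextX : X ∘L adjoint X = 1 - (kb 0) ∘L adjoint (kb 0))
    (hextY : Y ∘L adjoint Y = 1 - (kb 0) ∘L adjoint (kb 0))
    (W : Hb →L[ℂ] Hb) (hWu : (adjoint W) ∘L W = 1) (hWu' : W ∘L (adjoint W) = 1)
    (hequiv : W ∘L X ∘L liftD (adjoint W) = Y) :
    ∃ R : K →L[ℂ] K, (adjoint R) ∘L R = 1 ∧ R ∘L (adjoint R) = 1 ∧
      ∀ z : EuclideanSpace ℂ (Fin d), ‖z‖ < 1 → W ∘L kb z = kb z ∘L R := by
  have hk0 : adjoint (kb 0) ∘L kb 0 = 1 := by simpa [hb0] using hker 0 0 (by simp) (by simp)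
  have hWP : W ∘L (kb 0 ∘L adjoint (kb 0)) ∘L adjoint W = kb 0 ∘L adjoint (kb 0) := by
    have h := conj_comp_adjoint_conj W hWu X
    rw [hequiv, hextX, hextY, sub_comp, comp_sub, one_def, id_comp, ← one_def, hWu'] at h
    exact (sub_right_inj.mp h).symm
  obtain ⟨R, hR, hR', -, hW'k0⟩ := exists_unitary_comp_eq_comp_of_commute (kb 0) hk0 W hWu hWu'
    (comp_commute_of_conj_eq W _ hWu hWP)
  refine ⟨R, hR, hR', fun z hz => ?_⟩
  have hkz : kb z = W ∘L kb z ∘L adjoint R :=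
    calc kb z = Ring.inverse (1 - Y ∘L colOp z) ∘L kb 0 := (hGleasonY z hz).symm
    _ = W ∘L kb z ∘L adjoint R := by
      rw [← hequiv, one_sub_conj_comp_colOp W hWu' X z,
        ringInverse_conj_unitary W hWu hWu', comp_assoc, comp_assoc, hW'k0,
        ← comp_assoc _ (kb 0), hGleasonX z hz]
  conv_rhs => rw [hkz]
  simp only [comp_assoc, hR, one_def, comp_id]
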